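/- (Theorem 1, ε-stationarity of R-ProxSGD.) In the setting of the previous statement (same probability space, iterates X_{t+1} = Retr_{X_t}(ηζ_t) with ζ_t the subproblem minimizer for v_t, the same almost-sure retraction-smoothness, M₁, M₂ and Lipschitz hypotheses, γ = 2η/(2L̃η² + η + 1), L̃ = L_R/2 + L_h M₂, variance bound E[‖v_t − ∇f(X_t)‖²] ≤ σ²/s, F ≥ F* on St(d,r), Δ₀ = F(X₀) − F*, and G_t = (X_t − Retr_{X_t}(γξ_t))/γ with ξ_t the subproblem minimizer for ∇f(X_t)), let ε > 0 and suppose additionally that s ≥ M₁²σ²(28η + 16γ)ε⁻² and T ≥ 56M₁²Δ₀/(ηε²). Then (1/T)∑_{t=0}^{T−1} E[‖G_t‖] ≤ ε; in particular, an index ν sampled uniformly from {0, …, T−1} yields an ε-stochastic stationary point, i.e., E[‖G_ν‖] ≤ ε. -/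

import Mathlib

open Matrix MeasureTheory Finset

noncomputable section

/-- The space of real `d × r` matrices. -/
abbrev Mat (d r : ℕ) := Matrix (Fin d) (Fin r) ℝ

/-- The Frobenius inner product `⟨A, B⟩ = tr(Aᵀ B)`. -/
def finner {d r : ℕ} (A B : Mat d r) : ℝ := (Aᵀ * B).trace

/-- The Stiefel manifold `St(d,r) = {X : Xᵀ X = I}`. -/
def Stiefel {d r : ℕ} (X : Mat d r) : Prop := Xᵀ * X = 1

/-- The tangent space to the Stiefel manifold at `X`:
`T_X = {ζ : ζᵀ X + Xᵀ ζ = 0}`. -/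
def TangentAt {d r : ℕ} (X : Mat d r) : Set (Mat d r) :=
  {ζ | ζᵀ * X + Xᵀ * ζ = 0}

lemma posSemidef_one_add_transpose_mul_self {d r : ℕ} (ξ : Mat d r) :
    (1 + ξᵀ * ξ).PosSemidef := by
  have h := Matrix.posSemidef_conjTranspose_mul_self ξ
  rw [Matrix.conjTranspose_eq_transpose_of_trivial] at h
  exact Matrix.PosSemidef.one.add h

/-- The square root of a positive-semidefinite matrix, as `Matrix.PosSemidef.sqrt` was defined
in the older Mathlib (removed since). -/
def Matrix.PosSemidef.sqrt {n : Type*} [Fintype n] [DecidableEq n] {A : Matrix n n ℝ}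
    (hA : A.PosSemidef) : Matrix n n ℝ :=
  hA.1.eigenvectorUnitary.1 * diagonal ((↑) ∘ (Real.sqrt ∘ hA.1.eigenvalues)) *
    (star hA.1.eigenvectorUnitary : Matrix n n ℝ)

/-- The polar retraction `Retr_X(ξ) = (X + ξ)(I + ξᵀ ξ)^{-1/2}`, where the square root
is the unique positive-semidefinite (here positive-definite) square root. -/
def polarRetr {d r : ℕ} (X ξ : Mat d r) : Mat d r :=
  (X + ξ) * ((posSemidef_one_add_transpose_mul_self ξ).sqrt)⁻¹

/- Equip matrices with the Frobenius norm (the norm induced by `finner`). -/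
attribute [local instance] Matrix.frobeniusNormedAddCommGroup Matrix.frobeniusNormedSpace

/-- The subproblem objective `φ(ζ) = ⟨v, ζ⟩ + (1/(2γ))‖ζ‖² + h(X + ζ)`. -/
def phi {d r : ℕ} (γ : ℝ) (h : Mat d r → ℝ) (X v ζ : Mat d r) : ℝ :=
  finner v ζ + (1 / (2 * γ)) * ‖ζ‖ ^ 2 + h (X + ζ)

/-- `ζ` is a minimizer of `phi γ h X v` over the tangent space at `X`. -/
def IsSubMin {d r : ℕ} (γ : ℝ) (h : Mat d r → ℝ) (X v ζ : Mat d r) : Prop :=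
  ζ ∈ TangentAt X ∧ ∀ ζ' ∈ TangentAt X, phi γ h X v ζ ≤ phi γ h X v ζ'


-- helpers
lemma psd_sqrt_mul_self {n : Type*} [Fintype n] [DecidableEq n] {A : Matrix n n ℝ}
    (hA : A.PosSemidef) : hA.sqrt * hA.sqrt = A := by
  have hU : (star hA.1.eigenvectorUnitary : Matrix n n ℝ) * hA.1.eigenvectorUnitary.1 = 1 :=
    by exact Unitary.star_mul_self_of_mem hA.1.eigenvectorUnitary.2
  conv_rhs => rw [hA.1.spectral_theorem, Unitary.conjStarAlgAut_apply]
  simp only [Matrix.PosSemidef.sqrt]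
  rw [show ∀ a b c d e f : Matrix n n ℝ, a * b * c * (d * e * f) = a * b * (c * d) * e * f by
    intro a b c d e f; simp only [Matrix.mul_assoc]]
  rw [hU, Matrix.mul_one, Matrix.mul_assoc (hA.1.eigenvectorUnitary.1 : Matrix n n ℝ),
    diagonal_mul_diagonal]
  congr 2
  congr 1
  funext i
  simp [Real.mul_self_sqrt (hA.eigenvalues_nonneg i)]

lemma psd_sqrt_transpose {n : Type*} [Fintype n] [DecidableEq n] {A : Matrix n n ℝ}
    (hA : A.PosSemidef) : (hA.sqrt)ᵀ = hA.sqrt := by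
  simp only [Matrix.PosSemidef.sqrt, Matrix.transpose_mul]
  rw [← Matrix.conjTranspose_eq_transpose_of_trivial (star _), Matrix.star_eq_conjTranspose,
    Matrix.conjTranspose_conjTranspose, ← Matrix.conjTranspose_eq_transpose_of_trivial,
    ← Matrix.star_eq_conjTranspose, Matrix.mul_assoc]
  simp [Matrix.star_eq_conjTranspose, 
    Matrix.conjTranspose_eq_transpose_of_trivial]

lemma finner_eq_sum {d r : ℕ} (A B : Mat d r) :
    finner A B = ∑ i, ∑ j, A i j * B i j := by
  rw [finner, Matrix.trace]
  simp_rw [Matrix.diag_apply, Matrix.mul_apply, Matrix.transpose_apply]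
  rw [Finset.sum_comm]

lemma norm_sq_eq_finner {d r : ℕ} (A : Mat d r) : ‖A‖ ^ 2 = finner A A := by
  rw [finner_eq_sum, Matrix.frobenius_norm_def, ← Real.rpow_natCast _ 2, ← Real.rpow_mul (by positivity)]
  norm_num
  simp_rw [sq]

lemma finner_add_right {d r : ℕ} (A B C : Mat d r) :
    finner A (B + C) = finner A B + finner A C := by
  simp [finner, Matrix.mul_add]

lemma finner_smul_right {d r : ℕ} (c : ℝ) (A B : Mat d r) :
    finner A (c • B) = c * finner A B := by
  simp [finner, Matrix.mul_smul]

lemma finner_comm {d r : ℕ} (A B : Mat d r) : finner A B = finner B A := by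
  simp_rw [finner_eq_sum]; congr 1; ext i; congr 1; ext j; ring

lemma finner_sub_left {d r : ℕ} (A B C : Mat d r) :
    finner (A - B) C = finner A C - finner B C := by
  simp [finner, Matrix.transpose_sub, Matrix.sub_mul]

lemma finner_cs {d r : ℕ} (A B : Mat d r) : finner A B ≤ ‖A‖ * ‖B‖ := by
  have h1 : (finner A B) ^ 2 ≤ finner A A * finner B B := by
    rw [finner_eq_sum, finner_eq_sum, finner_eq_sum]
    calc (∑ i, ∑ j, A i j * B i j) ^ 2
        = (∑ p : Fin _ × Fin _, A p.1 p.2 * B p.1 p.2) ^ 2 := by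
          rw [← Finset.sum_product']; rfl
      _ ≤ (∑ p : Fin _ × Fin _, A p.1 p.2 ^ 2) * ∑ p : Fin _ × Fin _, B p.1 p.2 ^ 2 :=
          Finset.sum_mul_sq_le_sq_mul_sq _ _ _
      _ = (∑ i, ∑ j, A i j ^ 2) * ∑ i, ∑ j, B i j ^ 2 := by
          rw [← Finset.sum_product', ← Finset.sum_product']; rfl
      _ = (∑ i, ∑ j, A i j * A i j) * ∑ i, ∑ j, B i j * B i j := by
          simp_rw [sq]
  rw [← norm_sq_eq_finner, ← norm_sq_eq_finner] at h1
  nlinarith [norm_nonneg A, norm_nonneg B, mul_nonneg (norm_nonneg A) (norm_nonneg B), h1]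

lemma zero_mem_tangent {d r : ℕ} (X : Mat d r) : (0 : Mat d r) ∈ TangentAt X := by
  simp [TangentAt]

lemma smul_mem_tangent {d r : ℕ} {X χ : Mat d r} (c : ℝ) (h : χ ∈ TangentAt X) :
    c • χ ∈ TangentAt X := by
  simp only [TangentAt, Set.mem_setOf_eq] at h ⊢
  rw [Matrix.transpose_smul, Matrix.smul_mul, Matrix.mul_smul, ← smul_add, h, smul_zero]

lemma combo_mem_tangent {d r : ℕ} {X a b : Mat d r} (s t : ℝ)
    (ha : a ∈ TangentAt X) (hb : b ∈ TangentAt X) : s • a + t • b ∈ TangentAt X := by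
  have h1 := smul_mem_tangent s ha
  have h2 := smul_mem_tangent t hb
  simp only [TangentAt, Set.mem_setOf_eq] at h1 h2 ⊢
  rw [Matrix.transpose_add, Matrix.add_mul, Matrix.mul_add]
  have : (s • a)ᵀ * X + Xᵀ * (s • a) + ((t • b)ᵀ * X + Xᵀ * (t • b)) = 0 := by rw [h1, h2]; simp
  linear_combination (norm := abel1) this

-- the quadratic identity
lemma norm_combo_sq {d r : ℕ} (a b : Mat d r) (l : ℝ) :
    ‖(1 - l) • a + l • b‖ ^ 2
      = (1 - l) * ‖a‖ ^ 2 + l * ‖b‖ ^ 2 - l * (1 - l) * ‖a - b‖ ^ 2 := by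
  simp_rw [norm_sq_eq_finner, finner_eq_sum]
  simp only [Matrix.add_apply, Matrix.smul_apply, Matrix.sub_apply, smul_eq_mul]
  have key : ∀ (x : Fin d) (y : Fin r), ((1 - l) * a x y + l * b x y) * ((1 - l) * a x y + l * b x y)
      = (1 - l) * (a x y * a x y) + l * (b x y * b x y)
        - l * (1 - l) * ((a x y - b x y) * (a x y - b x y)) := by intro x y; ring
  simp_rw [key, Finset.sum_sub_distrib, Finset.sum_add_distrib, ← Finset.mul_sum]

-- strong minimality
lemma submin_strong {d r : ℕ} {γ : ℝ} (hγ : 0 < γ) {h : Mat d r → ℝ}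
    (hconv : ConvexOn ℝ Set.univ h) {X v ζ : Mat d r}
    (hmin : IsSubMin γ h X v ζ) :
    ∀ ζ' ∈ TangentAt X, phi γ h X v ζ + (1 / (2 * γ)) * ‖ζ' - ζ‖ ^ 2 ≤ phi γ h X v ζ' := by
  intro ζ' hζ'
  obtain ⟨hζT, hminp⟩ := hmin
  have key : ∀ l : ℝ, 0 < l → l < 1 →
      phi γ h X v ζ + (1 / (2 * γ)) * (1 - l) * ‖ζ' - ζ‖ ^ 2 ≤ phi γ h X v ζ' := by
    intro l hl0 hl1
    set w : Mat d r := (1 - l) • ζ + l • ζ' with hw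
    have hwT : w ∈ TangentAt X := combo_mem_tangent _ _ hζT hζ'
    have h1 : phi γ h X v ζ ≤ phi γ h X v w := hminp w hwT
    have hlin : finner v w = (1 - l) * finner v ζ + l * finner v ζ' := by
      rw [hw, finner_add_right, finner_smul_right, finner_smul_right]
    have hq : ‖w‖ ^ 2 = (1 - l) * ‖ζ‖ ^ 2 + l * ‖ζ'‖ ^ 2 - l * (1 - l) * ‖ζ - ζ'‖ ^ 2 :=
      norm_combo_sq ζ ζ' l
    have hh : h (X + w) ≤ (1 - l) * h (X + ζ) + l * h (X + ζ') := by
      have : X + w = (1 - l) • (X + ζ) + l • (X + ζ') := by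
        rw [hw]; module
      rw [this]
      exact hconv.2 (Set.mem_univ _) (Set.mem_univ _) (by linarith) (le_of_lt hl0) (by ring)
    have h2 : phi γ h X v w ≤ (1 - l) * phi γ h X v ζ + l * phi γ h X v ζ'
        - (1 / (2 * γ)) * (l * (1 - l) * ‖ζ - ζ'‖ ^ 2) := by
      simp only [phi]
      rw [hlin, hq]
      nlinarith [hh]
    have h3 : l * phi γ h X v ζ + (1 / (2 * γ)) * (l * (1 - l) * ‖ζ - ζ'‖ ^ 2)
        ≤ l * phi γ h X v ζ' := by nlinarith
    have hnormsym : ‖ζ - ζ'‖ = ‖ζ' - ζ‖ := by rw [← norm_neg]; congr 1; abel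
    rw [hnormsym] at h3
    have := mul_le_mul_of_nonneg_left h3 (show (0:ℝ) ≤ l⁻¹ by positivity)
    rw [mul_add] at this
    calc phi γ h X v ζ + (1 / (2 * γ)) * (1 - l) * ‖ζ' - ζ‖ ^ 2
        = l⁻¹ * (l * phi γ h X v ζ) + l⁻¹ * ((1 / (2 * γ)) * (l * (1 - l) * ‖ζ' - ζ‖ ^ 2)) := by
          field_simp
      _ ≤ l⁻¹ * (l * phi γ h X v ζ') := this
      _ = phi γ h X v ζ' := by field_simp
  -- take l → 0
  by_contra hcon
  push_neg at hcon
  set c := (1 / (2 * γ)) * ‖ζ' - ζ‖ ^ 2 with hc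
  have hc0 : 0 ≤ c := by positivity
  set δ := phi γ h X v ζ + c - phi γ h X v ζ' with hδ
  have hδ0 : 0 < δ := by simp only [hδ]; linarith
  rcases eq_or_lt_of_le hc0 with hceq | hclt
  · have := key (1/2) (by norm_num) (by norm_num)
    have hz : (1 / (2 * γ)) * ‖ζ' - ζ‖ ^ 2 = 0 := hceq.symm
    nlinarith [hz]
  · set l := min (1/2) (δ / (2 * c)) with hldef
    have hl0 : 0 < l := lt_min (by norm_num) (by positivity)
    have hl1 : l < 1 := lt_of_le_of_lt (min_le_left _ _) (by norm_num)
    have hk := key l hl0 hl1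
    have hlc : l * c ≤ δ / 2 := by
      calc l * c ≤ (δ / (2 * c)) * c := by
            exact mul_le_mul_of_nonneg_right (min_le_right _ _) hc0
        _ = δ / 2 := by field_simp
    have : phi γ h X v ζ + (1 / (2 * γ)) * (1 - l) * ‖ζ' - ζ‖ ^ 2
        = phi γ h X v ζ + c - l * c := by rw [hc]; ring
    rw [this] at hk
    linarith

/-- difference of two subproblem minimizers -/
lemma submin_gap {d r : ℕ} {γ : ℝ} (hγ : 0 < γ) {h : Mat d r → ℝ}
    (hconv : ConvexOn ℝ Set.univ h) {X v g ζ ξ : Mat d r}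
    (hζ : IsSubMin γ h X v ζ) (hξ : IsSubMin γ h X g ξ) :
    ‖ζ - ξ‖ ≤ γ * ‖g - v‖ := by
  have h1 := submin_strong hγ hconv hζ ξ hξ.1
  have h2 := submin_strong hγ hconv hξ ζ hζ.1
  -- phi γ h X v ζ + c‖ξ-ζ‖² ≤ phi γ h X v ξ ; phi γ h X g ξ + c‖ζ-ξ‖² ≤ phi γ h X g ζ
  have hsym : ‖ξ - ζ‖ = ‖ζ - ξ‖ := by rw [← norm_neg]; congr 1; abel
  rw [hsym] at h1
  have hexp : phi γ h X v ξ - phi γ h X v ζ + (phi γ h X g ζ - phi γ h X g ξ)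
      = finner (g - v) (ζ - ξ) := by
    simp only [phi, finner_sub_left]
    have e1 : finner v ξ - finner v ζ = - finner v (ζ - ξ) := by
      rw [show ζ - ξ = ζ + (-1 : ℝ) • ξ by module, finner_add_right, finner_smul_right]; ring
    have e2 : finner g ζ - finner g ξ = finner g (ζ - ξ) := by
      rw [show ζ - ξ = ζ + (-1 : ℝ) • ξ by module, finner_add_right, finner_smul_right]; ring
    linear_combination e1 + e2
  have hcs : finner (g - v) (ζ - ξ) ≤ ‖g - v‖ * ‖ζ - ξ‖ := finner_cs _ _
  have hhalf : (1:ℝ) / (2 * γ) * ‖ζ - ξ‖ ^ 2 + 1 / (2 * γ) * ‖ζ - ξ‖ ^ 2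
      = (1 / γ) * ‖ζ - ξ‖ ^ 2 := by field_simp; ring
  have key : (1 / γ) * ‖ζ - ξ‖ ^ 2 ≤ ‖g - v‖ * ‖ζ - ξ‖ := by linarith
  rcases eq_or_lt_of_le (norm_nonneg (ζ - ξ)) with h0 | h0
  · rw [← h0]; positivity
  · have h3 : (1 / γ) * ‖ζ - ξ‖ ≤ ‖g - v‖ := by
      nlinarith [key, h0, mul_pos h0 h0]
    have h4 := mul_le_mul_of_nonneg_left h3 (le_of_lt hγ)
    calc ‖ζ - ξ‖ = γ * ((1 / γ) * ‖ζ - ξ‖) := by field_simp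
      _ ≤ γ * ‖g - v‖ := h4

lemma stiefel_polarRetr {d r : ℕ} {X χ : Mat d r} (hX : Stiefel X)
    (hχ : χ ∈ TangentAt X) : Stiefel (polarRetr X χ) := by
  set hS := posSemidef_one_add_transpose_mul_self χ
  set Q : Matrix (Fin r) (Fin r) ℝ := hS.sqrt with hQ
  have hQQ : Q * Q = 1 + χᵀ * χ := psd_sqrt_mul_self hS
  have hdet : Q.det ≠ 0 := by
    have hpd : (1 + χᵀ * χ).PosDef := by
      have h := Matrix.posSemidef_conjTranspose_mul_self χ
      rw [Matrix.conjTranspose_eq_transpose_of_trivial] at h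
      exact Matrix.PosDef.add_posSemidef Matrix.PosDef.one h
    have : Q.det * Q.det = (1 + χᵀ * χ).det := by rw [← Matrix.det_mul, hQQ]
    intro h0
    rw [h0, mul_zero] at this
    exact (ne_of_gt hpd.det_pos) this.symm
  have hQsym : Qᵀ = Q := by
    exact psd_sqrt_transpose hS
  have hQinvsym : (Q⁻¹)ᵀ = Q⁻¹ := by rw [Matrix.transpose_nonsing_inv, hQsym]
  have hXχ : (X + χ)ᵀ * (X + χ) = Q * Q := by
    rw [Matrix.transpose_add, Matrix.add_mul, Matrix.mul_add, Matrix.mul_add, hQQ]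
    have h0 : χᵀ * X + Xᵀ * χ = 0 := hχ
    rw [Stiefel] at hX
    have : Xᵀ * X + Xᵀ * χ + (χᵀ * X + χᵀ * χ) = 1 + (χᵀ * X + Xᵀ * χ) + χᵀ * χ := by
      rw [hX]; abel
    rw [this, h0]
    abel
  rw [Stiefel, polarRetr]
  rw [Matrix.transpose_mul, hQinvsym]
  calc Q⁻¹ * (X + χ)ᵀ * ((X + χ) * Q⁻¹) = Q⁻¹ * ((X + χ)ᵀ * (X + χ)) * Q⁻¹ := by
        rw [Matrix.mul_assoc, Matrix.mul_assoc, Matrix.mul_assoc]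
    _ = Q⁻¹ * (Q * Q) * Q⁻¹ := by rw [hXχ]
    _ = (Q⁻¹ * Q) * (Q * Q⁻¹) := by rw [Matrix.mul_assoc, Matrix.mul_assoc, Matrix.mul_assoc]
    _ = 1 := by rw [Matrix.nonsing_inv_mul _ (isUnit_iff_ne_zero.mpr hdet), Matrix.mul_nonsing_inv _ (isUnit_iff_ne_zero.mpr hdet), Matrix.one_mul]

lemma finner_zero_right {d r : ℕ} (A : Mat d r) : finner A 0 = 0 := by
  simp [finner_eq_sum]

lemma step_bound {d r : ℕ} {γ η L_R L_h M₂ : ℝ}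
    (hη0 : 0 < η) (hη1 : η ≤ 1) (hγpos : 0 < γ)
    (hγ1 : η * (1 / γ) = (L_R / 2 + L_h * M₂) * η ^ 2 + (η + 1) / 2)
    (hLh : 0 < L_h)
    {f h : Mat d r → ℝ} (hconv : ConvexOn ℝ Set.univ h)
    (hlip : ∀ A B : Mat d r, |h A - h B| ≤ L_h * ‖A - B‖)
    {Gf : Mat d r → Mat d r} {Xt Xt1 v ζ : Mat d r}
    (hζmin : IsSubMin γ h Xt v ζ)
    (hsm : f Xt1 ≤ f Xt + η * finner (Gf Xt) ζ + (L_R * η ^ 2 / 2) * ‖ζ‖ ^ 2)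
    (happrox : ‖Xt1 - (Xt + η • ζ)‖ ≤ M₂ * η ^ 2 * ‖ζ‖ ^ 2) :
    f Xt1 + h Xt1 ≤ f Xt + h Xt + (η / 2) * ‖Gf Xt - v‖ ^ 2 - (1 / 2) * ‖ζ‖ ^ 2 := by
  -- minimality at 0
  have hD0 := submin_strong hγpos hconv hζmin 0 (zero_mem_tangent Xt)
  have hphiz : phi γ h Xt v 0 = h Xt := by
    simp [phi, finner_zero_right]
  have hnz : ‖(0 : Mat d r) - ζ‖ = ‖ζ‖ := by rw [zero_sub, norm_neg]
  rw [hphiz, hnz] at hD0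
  have hhalf : (1:ℝ) / (2 * γ) * ‖ζ‖ ^ 2 + 1 / (2 * γ) * ‖ζ‖ ^ 2 = (1 / γ) * ‖ζ‖ ^ 2 := by
    field_simp; ring
  have hD : finner v ζ + h (Xt + ζ) - h Xt ≤ -((1 / γ) * ‖ζ‖ ^ 2) := by
    simp only [phi] at hD0; linarith
  -- Lipschitz step
  have hB : h Xt1 ≤ h (Xt + η • ζ) + L_h * (M₂ * η ^ 2 * ‖ζ‖ ^ 2) := by
    have := hlip Xt1 (Xt + η • ζ)
    have h2 := le_of_abs_le this
    have h3 := mul_le_mul_of_nonneg_left happrox (le_of_lt hLh)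
    linarith
  -- convexity step
  have hC : h (Xt + η • ζ) ≤ (1 - η) * h Xt + η * h (Xt + ζ) := by
    have heq : Xt + η • ζ = (1 - η) • Xt + η • (Xt + ζ) := by module
    rw [heq]
    exact hconv.2 (Set.mem_univ _) (Set.mem_univ _) (by linarith) (le_of_lt hη0) (by ring)
  -- Cauchy-Schwarz + Young
  have hcs : finner (Gf Xt - v) ζ ≤ (1 / 2) * ‖Gf Xt - v‖ ^ 2 + (1 / 2) * ‖ζ‖ ^ 2 := by
    have h1 := finner_cs (Gf Xt - v) ζ
    nlinarith [sq_nonneg (‖Gf Xt - v‖ - ‖ζ‖)]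
  have hsplit : finner (Gf Xt) ζ = finner (Gf Xt - v) ζ + finner v ζ := by
    rw [finner_sub_left]; ring
  -- multiply hD by η
  have hDη := mul_le_mul_of_nonneg_left hD (le_of_lt hη0)
  have hcsη := mul_le_mul_of_nonneg_left hcs (le_of_lt hη0)
  have hηγ : η * -((1 / γ) * ‖ζ‖ ^ 2)
      = -(((L_R / 2 + L_h * M₂) * η ^ 2 + (η + 1) / 2) * ‖ζ‖ ^ 2) := by
    rw [← hγ1]; ring
  rw [hηγ] at hDη
  nlinarith [hB, hC, hsm, hDη, hcsη, hsplit]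

lemma G_bound {d r : ℕ} {γ M₁ : ℝ} (hγpos : 0 < γ) (hM₁ : 0 < M₁)
    {h : Mat d r → ℝ} (hconv : ConvexOn ℝ Set.univ h)
    {Gf : Mat d r → Mat d r} {Xt v ζ ξ G : Mat d r}
    (hζmin : IsSubMin γ h Xt v ζ) (hξmin : IsSubMin γ h Xt (Gf Xt) ξ)
    (hM₁b : ∀ χ ∈ TangentAt Xt, ‖polarRetr Xt χ - Xt‖ ≤ M₁ * ‖χ‖)
    (hGdef : G = (1 / γ) • (Xt - polarRetr Xt (γ • ξ))) :
    ‖G‖ ^ 2 ≤ 2 * M₁ ^ 2 * ‖ζ‖ ^ 2 + 2 * M₁ ^ 2 * γ ^ 2 * ‖Gf Xt - v‖ ^ 2 := by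
  have hgap : ‖ζ - ξ‖ ≤ γ * ‖Gf Xt - v‖ := submin_gap hγpos hconv hζmin hξmin
  have hξn : ‖ξ‖ ≤ ‖ζ‖ + γ * ‖Gf Xt - v‖ := by
    have h1 : ‖ξ‖ ≤ ‖ζ‖ + ‖ζ - ξ‖ := by
      have := norm_sub_norm_le ζ ξ
      have h2 := norm_sub_rev ζ ξ
      have := norm_le_insert' ζ ξ
      calc ‖ξ‖ = ‖ζ - (ζ - ξ)‖ := by congr 1; abel
        _ ≤ ‖ζ‖ + ‖ζ - ξ‖ := norm_sub_le _ _
    linarith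
  have hGn : ‖G‖ ≤ M₁ * ‖ξ‖ := by
    rw [hGdef, norm_smul]
    have hmem : γ • ξ ∈ TangentAt Xt := smul_mem_tangent γ hξmin.1
    have hb := hM₁b (γ • ξ) hmem
    rw [norm_smul] at hb
    have hsym : ‖Xt - polarRetr Xt (γ • ξ)‖ = ‖polarRetr Xt (γ • ξ) - Xt‖ := norm_sub_rev _ _
    rw [Real.norm_eq_abs, abs_of_pos (by positivity : (0:ℝ) < 1 / γ), hsym]
    calc (1 / γ) * ‖polarRetr Xt (γ • ξ) - Xt‖ ≤ (1 / γ) * (‖γ‖ * ‖ξ‖ * M₁) := by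
          rw [Real.norm_eq_abs, abs_of_pos hγpos] at hb ⊢
          apply mul_le_mul_of_nonneg_left _ (by positivity)
          linarith [hb]
      _ = M₁ * ‖ξ‖ := by
          rw [Real.norm_eq_abs, abs_of_pos hγpos]; field_simp
  have hGnn : (0:ℝ) ≤ ‖G‖ := norm_nonneg _
  have hξnn : (0:ℝ) ≤ ‖ξ‖ := norm_nonneg _
  have h1 : ‖G‖ ^ 2 ≤ (M₁ * ‖ξ‖) ^ 2 := pow_le_pow_left₀ hGnn hGn 2
  have h2 : ‖ξ‖ ^ 2 ≤ (‖ζ‖ + γ * ‖Gf Xt - v‖) ^ 2 := pow_le_pow_left₀ hξnn hξn 2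
  have h3 := mul_le_mul_of_nonneg_left h2 (sq_nonneg M₁)
  nlinarith [h1, h3, sq_nonneg (‖ζ‖ - γ * ‖Gf Xt - v‖), sq_nonneg M₁]

lemma final_arith (S a b ε : ℝ) (h2 : S ^ 2 ≤ a + b) (ha : a ≤ ε ^ 2 / 14)
    (hb : b ≤ ε ^ 2 / 4) (hS0 : 0 ≤ S) (hε : 0 < ε) : S ≤ ε := by nlinarith

lemma jensen_sq {Ω : Type*} [MeasurableSpace Ω] (P : Measure Ω) [IsProbabilityMeasure P]
    (g : Ω → ℝ) (hg : Integrable g P) (hg2 : Integrable (fun ω => g ω ^ 2) P) :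
    (∫ ω, g ω ∂P) ^ 2 ≤ ∫ ω, g ω ^ 2 ∂P := by
  set m := ∫ ω, g ω ∂P with hm
  have h0 : 0 ≤ ∫ ω, (g ω - m) ^ 2 ∂P := integral_nonneg fun ω => sq_nonneg _
  have heq : (fun ω => (g ω - m) ^ 2) = fun ω => (g ω ^ 2 - (2 * m) * g ω) + m ^ 2 := by
    funext ω; ring
  have i1 : Integrable (fun ω => g ω ^ 2 - (2 * m) * g ω) P := hg2.sub (hg.const_mul _)
  rw [heq, integral_add i1 (integrable_const _), integral_sub hg2 (hg.const_mul _),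
    MeasureTheory.integral_const_mul, integral_const] at h0
  simp only [probReal_univ, smul_eq_mul, one_mul] at h0
  rw [← hm] at h0
  nlinarith [h0]

lemma integrable_norm_of_sq {Ω : Type*} [MeasurableSpace Ω] (P : Measure Ω)
    [IsProbabilityMeasure P] (g : Ω → ℝ) (hg0 : ∀ ω, 0 ≤ g ω)
    (hg2 : Integrable (fun ω => g ω ^ 2) P) : Integrable g P := by
  have hm : AEStronglyMeasurable g P := by
    have h1 := hg2.aestronglyMeasurable
    have h2 : g = fun ω => Real.sqrt (g ω ^ 2) := by
      funext ω; rw [Real.sqrt_sq (hg0 ω)]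
    rw [h2]
    exact Real.continuous_sqrt.comp_aestronglyMeasurable h1
  have hbound : Integrable (fun ω => (1 + g ω ^ 2) / 2) P :=
    ((integrable_const (1:ℝ)).add hg2).div_const 2
  refine hbound.mono hm (ae_of_all _ fun ω => ?_)
  rw [Real.norm_eq_abs, Real.norm_eq_abs, abs_of_nonneg (hg0 ω),
    abs_of_nonneg (by nlinarith [sq_nonneg (g ω)] : (0:ℝ) ≤ (1 + g ω ^ 2) / 2)]
  nlinarith [sq_nonneg (g ω - 1)]

set_option maxHeartbeats 2000000 in
/-- Theorem 1, ε-stationarity of R-ProxSGD: under the additional sample-size and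
iteration-count conditions, `(1/T)∑_{t<T} E[‖G_t‖] ≤ ε`; in particular an index `ν` sampled
uniformly from `{0, …, T−1}` yields an ε-stochastic stationary point, `E[‖G_ν‖] ≤ ε`. -/
theorem RProxSGD_epsilon_stationary {d r : ℕ}
    {Ω : Type*} [MeasurableSpace Ω] (P : Measure Ω) [IsProbabilityMeasure P]
    (T : ℕ) (hT : 1 ≤ T)
    (γ η L_R L_h M₁ M₂ σ s Fstar Δ₀ : ℝ)
    (hη0 : 0 < η) (hη1 : η ≤ 1)
    (hγ : γ = 2 * η / (2 * (L_R / 2 + L_h * M₂) * η ^ 2 + η + 1))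
    (hLR : 0 < L_R) (hLh : 0 < L_h) (hM₁ : 0 < M₁) (hM₂ : 0 < M₂)
    (hσ : 0 ≤ σ) (hs : 0 < s)
    (f h : Mat d r → ℝ)
    (hconv : ConvexOn ℝ Set.univ h)
    (hlip : ∀ A B : Mat d r, |h A - h B| ≤ L_h * ‖A - B‖)
    (hdiff : Differentiable ℝ f)
    (Gf : Mat d r → Mat d r)
    (hgrad : ∀ Y u : Mat d r, (fderiv ℝ f Y) u = finner (Gf Y) u)
    (hFlb : ∀ Y : Mat d r, Stiefel Y → Fstar ≤ f Y + h Y)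
    (X0 : Mat d r) (hX0S : Stiefel X0)
    (hΔ₀ : Δ₀ = (f X0 + h X0) - Fstar)
    (X v ζ ξ : ℕ → Ω → Mat d r)
    (hX0 : ∀ ω, X 0 ω = X0)
    (has : ∀ᵐ ω ∂P, ∀ t < T,
      Stiefel (X t ω) ∧
      IsSubMin γ h (X t ω) (v t ω) (ζ t ω) ∧
      X (t + 1) ω = polarRetr (X t ω) (η • ζ t ω) ∧
      f (X (t + 1) ω) ≤
        f (X t ω) + η * finner (Gf (X t ω)) (ζ t ω) + (L_R * η ^ 2 / 2) * ‖ζ t ω‖ ^ 2 ∧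
      ‖X (t + 1) ω - (X t ω + η • ζ t ω)‖ ≤ M₂ * η ^ 2 * ‖ζ t ω‖ ^ 2 ∧
      (∀ χ ∈ TangentAt (X t ω), ‖polarRetr (X t ω) χ - X t ω‖ ≤ M₁ * ‖χ‖) ∧
      IsSubMin γ h (X t ω) (Gf (X t ω)) (ξ t ω))
    (G : ℕ → Ω → Mat d r)
    (hG : ∀ t ω, G t ω = (1 / γ) • (X t ω - polarRetr (X t ω) (γ • ξ t ω)))
    (hintF : ∀ t ≤ T, Integrable (fun ω => f (X t ω) + h (X t ω)) P)
    (hintζ : ∀ t < T, Integrable (fun ω => ‖ζ t ω‖ ^ 2) P)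
    (hintv : ∀ t < T, Integrable (fun ω => ‖v t ω - Gf (X t ω)‖ ^ 2) P)
    (hintG : ∀ t < T, Integrable (fun ω => ‖G t ω‖ ^ 2) P)
    (hvar : ∀ t < T, ∫ ω, ‖v t ω - Gf (X t ω)‖ ^ 2 ∂P ≤ σ ^ 2 / s)
    (ε : ℝ) (hε : 0 < ε)
    (hsbound : s ≥ M₁ ^ 2 * σ ^ 2 * (28 * η + 16 * γ) / ε ^ 2)
    (hTbound : (T : ℝ) ≥ 56 * M₁ ^ 2 * Δ₀ / (η * ε ^ 2)) :
    (1 / (T : ℝ)) * ∑ t ∈ Finset.range T, ∫ ω, ‖G t ω‖ ∂P ≤ ε := by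
  have hLt : 0 < L_R / 2 + L_h * M₂ := by positivity
  have hden : 0 < 2 * (L_R / 2 + L_h * M₂) * η ^ 2 + η + 1 := by positivity
  have hγpos : 0 < γ := by rw [hγ]; positivity
  have hγ1 : η * (1 / γ) = (L_R / 2 + L_h * M₂) * η ^ 2 + (η + 1) / 2 := by
    rw [hγ]; field_simp; ring
  have hγle : γ ≤ 2 * η := by
    have h1 : (1:ℝ) ≤ 2 * (L_R / 2 + L_h * M₂) * η ^ 2 + η + 1 := by nlinarith [hLt, hη0, sq_nonneg η]
    rw [hγ, div_le_iff₀ hden]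
    nlinarith [mul_le_mul_of_nonneg_left h1 (by linarith : (0:ℝ) ≤ 2 * η)]
  have hT0 : (0 : ℝ) < (T : ℝ) := by exact_mod_cast hT
  have hΔ₀nn : 0 ≤ Δ₀ := by rw [hΔ₀]; linarith [hFlb X0 hX0S]
  -- expectations
  set A : ℕ → ℝ := fun t => ∫ ω, (f (X t ω) + h (X t ω)) ∂P with hA
  set Z : ℕ → ℝ := fun t => ∫ ω, ‖ζ t ω‖ ^ 2 ∂P with hZ
  set Ev : ℕ → ℝ := fun t => ∫ ω, ‖v t ω - Gf (X t ω)‖ ^ 2 ∂P with hEv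
  set EG : ℕ → ℝ := fun t => ∫ ω, ‖G t ω‖ ^ 2 ∂P with hEG
  set EGn : ℕ → ℝ := fun t => ∫ ω, ‖G t ω‖ ∂P with hEGn
  -- per-step expected descent
  have hstep : ∀ t < T, A (t + 1) ≤ A t + ((η / 2) * Ev t - (1 / 2) * Z t) := by
    intro t ht
    have hae : ∀ᵐ ω ∂P, f (X (t+1) ω) + h (X (t+1) ω) ≤
        (f (X t ω) + h (X t ω)) +
          ((η / 2) * ‖v t ω - Gf (X t ω)‖ ^ 2 - (1 / 2) * ‖ζ t ω‖ ^ 2) := by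
      filter_upwards [has] with ω hω
      obtain ⟨hS, hζm, hret, hsm, happ, hM1b, hξm⟩ := hω t ht
      have hsb := step_bound hη0 hη1 hγpos hγ1 hLh hconv hlip hζm hsm happ
      rw [norm_sub_rev] at hsb
      linarith
    have i1 : Integrable (fun ω => (η / 2) * ‖v t ω - Gf (X t ω)‖ ^ 2) P :=
      (hintv t ht).const_mul _
    have i2 : Integrable (fun ω => (1 / 2) * ‖ζ t ω‖ ^ 2) P := (hintζ t ht).const_mul _
    have i3 : Integrable (fun ω => (η / 2) * ‖v t ω - Gf (X t ω)‖ ^ 2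
        - (1 / 2) * ‖ζ t ω‖ ^ 2) P := i1.sub i2
    have hR : Integrable (fun ω => (f (X t ω) + h (X t ω)) +
        ((η / 2) * ‖v t ω - Gf (X t ω)‖ ^ 2 - (1 / 2) * ‖ζ t ω‖ ^ 2)) P :=
      (hintF t (le_of_lt ht)).add i3
    have := integral_mono_ae (hintF (t+1) ht) hR hae
    rwa [integral_add (hintF t (le_of_lt ht)) i3, integral_sub i1 i2,
      MeasureTheory.integral_const_mul, MeasureTheory.integral_const_mul] at this
  -- per-step G bound in expectation
  have hGstep : ∀ t < T, EG t ≤ 2 * M₁ ^ 2 * Z t + 2 * M₁ ^ 2 * γ ^ 2 * Ev t := by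
    intro t ht
    have hae : ∀ᵐ ω ∂P, ‖G t ω‖ ^ 2 ≤
        2 * M₁ ^ 2 * ‖ζ t ω‖ ^ 2 + 2 * M₁ ^ 2 * γ ^ 2 * ‖v t ω - Gf (X t ω)‖ ^ 2 := by
      filter_upwards [has] with ω hω
      obtain ⟨hS, hζm, hret, hsm, happ, hM1b, hξm⟩ := hω t ht
      have := G_bound hγpos hM₁ hconv hζm hξm hM1b (hG t ω)
      rw [norm_sub_rev (Gf (X t ω))] at this
      linarith
    have i1 : Integrable (fun ω => 2 * M₁ ^ 2 * ‖ζ t ω‖ ^ 2) P := (hintζ t ht).const_mul _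
    have i2 : Integrable (fun ω => 2 * M₁ ^ 2 * γ ^ 2 * ‖v t ω - Gf (X t ω)‖ ^ 2) P :=
      (hintv t ht).const_mul _
    have hR : Integrable (fun ω => 2 * M₁ ^ 2 * ‖ζ t ω‖ ^ 2
        + 2 * M₁ ^ 2 * γ ^ 2 * ‖v t ω - Gf (X t ω)‖ ^ 2) P := i1.add i2
    have := integral_mono_ae (hintG t ht) hR hae
    rwa [integral_add i1 i2,
      MeasureTheory.integral_const_mul, MeasureTheory.integral_const_mul] at this
  -- telescoping
  have htel : ∀ n, n ≤ T → A n + (1/2) * ∑ t ∈ Finset.range n, Z t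
      ≤ A 0 + (η/2) * ∑ t ∈ Finset.range n, Ev t := by
    intro n
    induction n with
    | zero => intro _; simp
    | succ n ih =>
      intro hn
      have hnT : n < T := hn
      have h1 := ih (le_of_lt hnT)
      have h2 := hstep n hnT
      rw [Finset.sum_range_succ, Finset.sum_range_succ]
      linarith
  have hA0 : A 0 = Δ₀ + Fstar := by
    have : A 0 = ∫ _ω, (f X0 + h X0) ∂P := by
      simp only [hA]; congr 1; funext ω; rw [hX0 ω]
    rw [this, integral_const]
    simp [hΔ₀]
  have hAT : Fstar ≤ A T := by
    have hae : ∀ᵐ ω ∂P, Fstar ≤ f (X T ω) + h (X T ω) := by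
      filter_upwards [has] with ω hω
      obtain ⟨hS, hζm, hret, -, -, -, -⟩ := hω (T-1) (by omega)
      have hTT : T - 1 + 1 = T := by omega
      rw [hTT] at hret
      have hST : Stiefel (X T ω) := by
        rw [hret]
        exact stiefel_polarRetr hS (smul_mem_tangent η hζm.1)
      exact hFlb _ hST
    have := integral_mono_ae (integrable_const Fstar) (hintF T le_rfl) hae
    rwa [integral_const, probReal_univ, one_smul] at this
  have hEvsum : ∑ t ∈ Finset.range T, Ev t ≤ (T : ℝ) * (σ ^ 2 / s) := by
    calc ∑ t ∈ Finset.range T, Ev t ≤ ∑ t ∈ Finset.range T, (σ ^ 2 / s) :=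
          Finset.sum_le_sum fun t ht => hvar t (Finset.mem_range.mp ht)
      _ = (T : ℝ) * (σ ^ 2 / s) := by rw [Finset.sum_const, Finset.card_range]; simp
  have hZsum : (1/2) * ∑ t ∈ Finset.range T, Z t ≤ Δ₀ + (η/2) * ((T:ℝ) * (σ ^ 2 / s)) := by
    have h1 := htel T le_rfl
    have h2 := mul_le_mul_of_nonneg_left hEvsum (by linarith : (0:ℝ) ≤ η/2)
    rw [hA0] at h1
    linarith
  have hEGsum : ∑ t ∈ Finset.range T, EG t
      ≤ 4 * M₁ ^ 2 * Δ₀ + (2 * M₁ ^ 2 * η + 2 * M₁ ^ 2 * γ ^ 2) * ((T:ℝ) * (σ ^ 2 / s)) := by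
    calc ∑ t ∈ Finset.range T, EG t
        ≤ ∑ t ∈ Finset.range T, (2 * M₁ ^ 2 * Z t + 2 * M₁ ^ 2 * γ ^ 2 * Ev t) :=
          Finset.sum_le_sum fun t ht => hGstep t (Finset.mem_range.mp ht)
      _ = 2 * M₁ ^ 2 * (∑ t ∈ Finset.range T, Z t)
            + 2 * M₁ ^ 2 * γ ^ 2 * (∑ t ∈ Finset.range T, Ev t) := by
          rw [Finset.sum_add_distrib, ← Finset.mul_sum, ← Finset.mul_sum]
      _ ≤ 2 * M₁ ^ 2 * (2 * Δ₀ + η * ((T:ℝ) * (σ ^ 2 / s)))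
            + 2 * M₁ ^ 2 * γ ^ 2 * ((T:ℝ) * (σ ^ 2 / s)) := by
          have h2 := mul_le_mul_of_nonneg_left hEvsum (by positivity : (0:ℝ) ≤ 2 * M₁ ^ 2 * γ ^ 2)
          have h3 : (∑ t ∈ Finset.range T, Z t) ≤ 2 * Δ₀ + η * ((T:ℝ) * (σ ^ 2 / s)) := by
            linarith
          have h4 := mul_le_mul_of_nonneg_left h3 (by positivity : (0:ℝ) ≤ 2 * M₁ ^ 2)
          linarith
      _ = 4 * M₁ ^ 2 * Δ₀ + (2 * M₁ ^ 2 * η + 2 * M₁ ^ 2 * γ ^ 2) * ((T:ℝ) * (σ ^ 2 / s)) := by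
          ring
  -- Jensen per index
  have hjen : ∀ t < T, (EGn t) ^ 2 ≤ EG t := by
    intro t ht
    exact jensen_sq P _ (integrable_norm_of_sq P _ (fun ω => norm_nonneg _) (hintG t ht))
      (hintG t ht)
  have hEGnn : ∀ t, 0 ≤ EGn t := fun t => integral_nonneg fun ω => norm_nonneg _
  -- Cauchy-Schwarz over t
  have hCS : (∑ t ∈ Finset.range T, EGn t) ^ 2 ≤ (T : ℝ) * ∑ t ∈ Finset.range T, (EGn t) ^ 2 := by
    have := Finset.sum_mul_sq_le_sq_mul_sq (Finset.range T) (fun _ => (1:ℝ)) EGn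
    simpa [Finset.card_range] using this
  have hsum2 : ∑ t ∈ Finset.range T, (EGn t) ^ 2 ≤ ∑ t ∈ Finset.range T, EG t :=
    Finset.sum_le_sum fun t ht => hjen t (Finset.mem_range.mp ht)
  -- final arithmetic
  set S : ℝ := (1 / (T : ℝ)) * ∑ t ∈ Finset.range T, EGn t with hS
  have hS0 : 0 ≤ S := by
    apply mul_nonneg (by positivity)
    exact Finset.sum_nonneg fun t _ => hEGnn t
  have hSsq : S ^ 2 ≤ (1 / (T:ℝ)) * ∑ t ∈ Finset.range T, EG t := by
    have h1 : S ^ 2 = (∑ t ∈ Finset.range T, EGn t) ^ 2 / (T:ℝ) ^ 2 := by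
      rw [hS]; field_simp
    rw [h1, div_le_iff₀ (by positivity)]
    have h2 : 1 / (T:ℝ) * (∑ t ∈ Finset.range T, EG t) * (T:ℝ) ^ 2
        = (T:ℝ) * ∑ t ∈ Finset.range T, EG t := by field_simp
    rw [h2]
    exact hCS.trans (mul_le_mul_of_nonneg_left hsum2 (le_of_lt hT0))
  -- bound the two terms
  have hterm1 : 4 * M₁ ^ 2 * Δ₀ / (T:ℝ) ≤ ε ^ 2 / 14 := by
    have h1 : 56 * M₁ ^ 2 * Δ₀ ≤ (T:ℝ) * (η * ε ^ 2) := by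
      rw [ge_iff_le, div_le_iff₀ (by positivity)] at hTbound
      linarith
    rw [div_le_iff₀ hT0]
    nlinarith [hη1, hε, sq_nonneg ε, hT0, mul_pos hT0 (mul_pos hη0 (mul_pos hε hε))]
  have hterm2 : (2 * M₁ ^ 2 * η + 2 * M₁ ^ 2 * γ ^ 2) * (σ ^ 2 / s) ≤ ε ^ 2 / 4 := by
    have hms : M₁ ^ 2 * σ ^ 2 / s ≤ ε ^ 2 / (28 * η + 16 * γ) := by
      rw [div_le_div_iff₀ hs (by positivity)]
      rw [ge_iff_le, div_le_iff₀ (by positivity)] at hsbound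
      nlinarith [hsbound]
    have hγ2 : γ ^ 2 ≤ 2 * γ := by nlinarith [hγle, hγpos, hη1]
    have hkey : 2 * η + 2 * γ ^ 2 ≤ (28 * η + 16 * γ) / 4 := by nlinarith [hγ2, hγpos, hη0]
    have h5 : (2 * M₁ ^ 2 * η + 2 * M₁ ^ 2 * γ ^ 2) * (σ ^ 2 / s)
        = (2 * η + 2 * γ ^ 2) * (M₁ ^ 2 * σ ^ 2 / s) := by ring
    rw [h5]
    calc (2 * η + 2 * γ ^ 2) * (M₁ ^ 2 * σ ^ 2 / s)
        ≤ (2 * η + 2 * γ ^ 2) * (ε ^ 2 / (28 * η + 16 * γ)) := by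
          apply mul_le_mul_of_nonneg_left hms (by positivity)
      _ ≤ ((28 * η + 16 * γ) / 4) * (ε ^ 2 / (28 * η + 16 * γ)) := by
          apply mul_le_mul_of_nonneg_right hkey (by positivity)
      _ = ε ^ 2 / 4 := by field_simp
  have h1 : (1 / (T:ℝ)) * ∑ t ∈ Finset.range T, EG t
        ≤ 4 * M₁ ^ 2 * Δ₀ / (T:ℝ) + (2 * M₁ ^ 2 * η + 2 * M₁ ^ 2 * γ ^ 2) * (σ ^ 2 / s) := by
      have := mul_le_mul_of_nonneg_left hEGsum (by positivity : (0:ℝ) ≤ 1 / (T:ℝ))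
      calc (1 / (T:ℝ)) * ∑ t ∈ Finset.range T, EG t
          ≤ (1 / (T:ℝ)) * (4 * M₁ ^ 2 * Δ₀
              + (2 * M₁ ^ 2 * η + 2 * M₁ ^ 2 * γ ^ 2) * ((T:ℝ) * (σ ^ 2 / s))) := this
        _ = 4 * M₁ ^ 2 * Δ₀ / (T:ℝ) + (2 * M₁ ^ 2 * η + 2 * M₁ ^ 2 * γ ^ 2) * (σ ^ 2 / s) := by
            field_simp
  exact final_arith S _ _ ε (le_trans hSsq h1) hterm1 hterm2 hS0 hε
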